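/- arXiv:1707.08746 — 3 statements merged into one kernel-verified Lean document; each statement's English description precedes it below -/
import Mathlib

section
/- Every formula of public announcement logic is equivalent to its announcement-free translation: for all φ ∈ L_PAL, and all pointed epistemic models (M,w), (M,w) ⊨ φ if and only if (M,w) ⊨ t(φ), where t is the standard translation into purely epistemic logic. -/
inductive Form (A : Type) : Type
  | atom : Nat → Form A
  | bot  : Form A
  | neg  : Form A → Form A
  | and  : Form A → Form A → Form A
  | know : A → Form A → Form A
  | ann  : Form A → Form A → Form A

def Form.imp {A : Type} (φ ψ : Form A) : Form A := .neg (.and φ (.neg ψ))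

def Form.top {A : Type} : Form A := .neg .bot

/-- Purely epistemic (announcement-free) formulas: the language L_EL. -/
def Form.IsEL {A : Type} : Form A → Prop
  | .atom _ => True
  | .bot => True
  | .neg φ => φ.IsEL
  | .and φ ψ => φ.IsEL ∧ ψ.IsEL
  | .know _ φ => φ.IsEL
  | .ann _ _ => False

structure Model (A : Type) where
  W : Type
  R : A → W → W → Prop
  V : Nat → W → Prop

/-- The submodel induced by a set of states. -/
def Model.restrict {A : Type} (M : Model A) (S : Set M.W) : Model A where
  W := {v : M.W // v ∈ S}
  R := fun a v u => M.R a v.1 u.1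
  V := fun n v => M.V n v.1

/-- Satisfaction for public announcement logic. -/
def Sat {A : Type} : (M : Model A) → M.W → Form A → Prop
  | M, w, .atom n => M.V n w
  | _, _, .bot => False
  | M, w, .neg φ => ¬ Sat M w φ
  | M, w, .and φ ψ => Sat M w φ ∧ Sat M w ψ
  | M, w, .know a φ => ∀ v, M.R a w v → Sat M v φ
  | M, w, .ann φ ψ => ∀ h : Sat M w φ, Sat (M.restrict {v | Sat M v φ}) ⟨w, h⟩ ψ

/-- An epistemic (S5) model: every accessibility relation is an equivalence. -/
def Model.IsEpistemic {A : Type} (M : Model A) : Prop := ∀ a, Equivalence (M.R a)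

/-- Group announcement formula ⋀_{i ∈ G} K_i (f i). -/
noncomputable def gConj {A : Type} (G : Finset A) (f : A → Form A) : Form A :=
  G.toList.foldr (fun a r => (Form.know a (f a)).and r) Form.top

/-- Translation of announcement formulas: `trAnn φ tφ ψ` computes t([φ]ψ), where `tφ = t(φ)`. -/
def trAnn {A : Type} : Form A → Form A → Form A → Form A
  | _, tφ, .atom n => tφ.imp (.atom n)
  | _, tφ, .bot => tφ.imp .bot
  | φ, tφ, .neg ψ => tφ.imp (.neg (trAnn φ tφ ψ))
  | φ, tφ, .and ψ χ => .and (trAnn φ tφ ψ) (trAnn φ tφ χ)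
  | φ, tφ, .know a ψ => tφ.imp (.know a (trAnn φ tφ ψ))
  | φ, tφ, .ann ψ χ => trAnn (.and φ (.ann φ ψ)) (.and tφ (trAnn φ tφ ψ)) χ

/-- The standard translation of PAL into epistemic logic:
t(p)=p, t(¬φ)=¬t(φ), t(φ∧ψ)=t(φ)∧t(ψ), t(K_a φ)=K_a t(φ), t([φ]p)=t(φ)→p,
t([φ]¬ψ)=t(φ)→¬t([φ]ψ), t([φ](ψ∧χ))=t([φ]ψ)∧t([φ]χ), t([φ]K_aψ)=t(φ)→K_a t([φ]ψ),
t([φ][ψ]χ)=t([φ∧[φ]ψ]χ). -/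
def tr {A : Type} : Form A → Form A
  | .atom n => .atom n
  | .bot => .bot
  | .neg φ => .neg (tr φ)
  | .and φ ψ => .and (tr φ) (tr ψ)
  | .know a φ => .know a (tr φ)
  | .ann φ ψ => trAnn φ (tr φ) ψ


/-- Invariance of satisfaction under surjective "isomorphisms" of models. -/
lemma sat_iso {A : Type} : ∀ (χ : Form A) (M N : Model A) (f : M.W → N.W),
    Function.Surjective f →
    (∀ a w v, N.R a (f w) (f v) ↔ M.R a w v) →
    (∀ n w, N.V n (f w) ↔ M.V n w) →
    ∀ w, Sat M w χ ↔ Sat N (f w) χ := by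
  intro χ
  induction χ with
  | atom n => intro M N f _ _ hV w; exact (hV n w).symm
  | bot => intro M N f _ _ _ w; exact Iff.rfl
  | neg ψ ih => intro M N f hs hR hV w; exact not_congr (ih M N f hs hR hV w)
  | and ψ χ ih1 ih2 =>
      intro M N f hs hR hV w
      exact and_congr (ih1 M N f hs hR hV w) (ih2 M N f hs hR hV w)
  | know a ψ ih =>
      intro M N f hs hR hV w
      constructor
      · intro H u hu
        obtain ⟨v, rfl⟩ := hs u
        exact (ih M N f hs hR hV v).mp (H v ((hR a w v).mp hu))
      · intro H v hv
        exact (ih M N f hs hR hV v).mpr (H (f v) ((hR a w v).mpr hv))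
  | ann φ ψ ihφ ihψ =>
      intro M N f hs hR hV w
      -- restricted models
      set S : Set M.W := {v | Sat M v φ} with hS
      set S' : Set N.W := {u | Sat N u φ} with hS'
      have hmem : ∀ v : M.W, Sat M v φ ↔ Sat N (f v) φ := fun v => ihφ M N f hs hR hV v
      let f' : (M.restrict S).W → (N.restrict S').W :=
        fun x => ⟨f x.1, (hmem x.1).mp x.2⟩
      have hs' : Function.Surjective f' := by
        rintro ⟨u, hu⟩
        obtain ⟨v, hv⟩ := hs u
        refine ⟨⟨v, (hmem v).mpr (hv ▸ hu)⟩, ?_⟩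
        apply Subtype.ext
        exact hv
      have hR' : ∀ a w v, (N.restrict S').R a (f' w) (f' v) ↔ (M.restrict S).R a w v :=
        fun a x y => hR a x.1 y.1
      have hV' : ∀ n w, (N.restrict S').V n (f' w) ↔ (M.restrict S).V n w :=
        fun n x => hV n x.1
      constructor
      · intro H h'
        have hw : Sat M w φ := (hmem w).mpr h'
        exact (ihψ (M.restrict S) (N.restrict S') f' hs' hR' hV' ⟨w, hw⟩).mp (H hw)
      · intro H h
        exact (ihψ (M.restrict S) (N.restrict S') f' hs' hR' hV' ⟨w, h⟩).mpr
          (H ((hmem w).mp h))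

/-- Composition of announcements: [φ][ψ]χ ↔ [φ ∧ [φ]ψ]χ semantically. -/
lemma sat_ann_comp {A : Type} (M : Model A) (φ ψ χ : Form A) (w : M.W) :
    Sat M w (.ann φ (.ann ψ χ)) ↔ Sat M w (.ann (.and φ (.ann φ ψ)) χ) := by
  set S : Set M.W := {v | Sat M v φ}
  set M' : Model A := M.restrict S
  set S' : Set M'.W := {v | Sat M' v ψ}
  set T : Set M.W := {v | Sat M v (Form.and φ (Form.ann φ ψ))}
  let f : (M'.restrict S').W → (M.restrict T).W :=
    fun x => ⟨x.1.1, ⟨x.1.2, fun _ => x.2⟩⟩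
  have hs : Function.Surjective f := by
    rintro ⟨v, hv, hann⟩
    exact ⟨⟨⟨v, hv⟩, hann hv⟩, Subtype.ext rfl⟩
  have hR : ∀ a x y, (M.restrict T).R a (f x) (f y) ↔ (M'.restrict S').R a x y :=
    fun a x y => Iff.rfl
  have hV : ∀ n x, (M.restrict T).V n (f x) ↔ (M'.restrict S').V n x :=
    fun n x => Iff.rfl
  constructor
  · intro H h
    obtain ⟨hφ, hann⟩ := h
    exact (sat_iso χ _ _ f hs hR hV ⟨⟨w, hφ⟩, hann hφ⟩).mp (H hφ (hann hφ))
  · intro H hφ h2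
    exact (sat_iso χ _ _ f hs hR hV ⟨⟨w, hφ⟩, h2⟩).mpr (H ⟨hφ, fun _ => h2⟩)

/-- Correctness of the announcement translation. -/
lemma trAnn_correct {A : Type} : ∀ (ψ φ tφ : Form A),
    (∀ (M : Model A) (w : M.W), Sat M w φ ↔ Sat M w tφ) →
    ∀ (M : Model A) (w : M.W), Sat M w (.ann φ ψ) ↔ Sat M w (trAnn φ tφ ψ) := by
  intro ψ
  induction ψ with
  | atom n =>
      intro φ tφ h M w
      simp only [Sat, trAnn, Form.imp, Model.restrict, ← h M w]
      constructor
      · intro H; rintro ⟨h1, h2⟩; exact h2 (H h1)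
      · intro H h1; by_contra hc; exact H ⟨h1, hc⟩
  | bot =>
      intro φ tφ h M w
      simp only [Sat, trAnn, Form.imp, ← h M w]
      constructor
      · intro H; rintro ⟨h1, h2⟩; exact h2 (H h1)
      · intro H h1; by_contra hc; exact H ⟨h1, hc⟩
  | neg ψ ih =>
      intro φ tφ h M w
      have key := ih φ tφ h M w
      simp only [Sat, trAnn, Form.imp, ← h M w] at *
      constructor
      · intro H; rintro ⟨h1, h2⟩
        exact h2 fun hc => H h1 (key.mpr hc h1)
      · intro H h1; by_contra hc
        exact H ⟨h1, fun hn => hn (key.mp fun h' => hc)⟩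
  | and ψ χ ih1 ih2 =>
      intro φ tφ h M w
      have k1 := ih1 φ tφ h M w
      have k2 := ih2 φ tφ h M w
      simp only [Sat, trAnn] at *
      constructor
      · intro H
        exact ⟨k1.mp fun h1 => (H h1).1, k2.mp fun h1 => (H h1).2⟩
      · rintro ⟨H1, H2⟩ h1
        exact ⟨k1.mpr H1 h1, k2.mpr H2 h1⟩
  | know a ψ ih =>
      intro φ tφ h M w
      simp only [Sat, trAnn, Form.imp, ← h M w]
      constructor
      · intro H; rintro ⟨h1, h2⟩
        apply h2; intro v hv
        exact (ih φ tφ h M v).mp (fun hφv => H h1 ⟨v, hφv⟩ hv)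
      · intro H h1
        rintro ⟨v, hφv⟩ hv
        have h2 : ∀ v, M.R a w v → Sat M v (trAnn φ tφ ψ) := by
          by_contra hc; exact H ⟨h1, hc⟩
        exact (ih φ tφ h M v).mpr (h2 v hv) hφv
  | ann ψ χ ihψ ihχ =>
      intro φ tφ h M w
      have h' : ∀ (M : Model A) (w : M.W),
          Sat M w (Form.and φ (Form.ann φ ψ)) ↔
          Sat M w (Form.and tφ (trAnn φ tφ ψ)) := by
        intro M w
        simp only [Sat]
        exact and_congr (h M w) (ihψ φ tφ h M w)
      have key := ihχ (Form.and φ (Form.ann φ ψ)) (Form.and tφ (trAnn φ tφ ψ)) h' M w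
      simp only [trAnn]
      exact (sat_ann_comp M φ ψ χ w).trans key

/-- Every PAL formula is equivalent to its announcement-free standard translation. -/
theorem tr_correct {A : Type} (φ : Form A) (M : Model A) (hM : M.IsEpistemic) (w : M.W) :
    Sat M w φ ↔ Sat M w (tr φ) := by
  clear hM
  induction φ generalizing M w with
  | atom n => exact Iff.rfl
  | bot => exact Iff.rfl
  | neg ψ ih => exact not_congr (ih M w)
  | and ψ χ ih1 ih2 => exact and_congr (ih1 M w) (ih2 M w)
  | know a ψ ih =>
      exact ⟨fun H v hv => (ih M v).mp (H v hv), fun H v hv => (ih M v).mpr (H v hv)⟩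
  | ann ψ χ ihψ ihχ =>
      exact trAnn_correct χ ψ (tr ψ) (fun M w => ihψ M w) M w
end

section
/- Lemma 1 of the paper: for all agents a, ..., b, all epistemic formulas ψ, χ_a, ..., χ_b ∈ L_EL, and all formulas φ, the formula [ψ ∧ K_a t([ψ]χ_a) ∧ ... ∧ K_b t([ψ]χ_b)] φ ↔ [ψ][K_a χ_a ∧ ... ∧ K_b χ_b] φ is valid in all epistemic models, where t is the standard translation of PAL into epistemic logic. -/
/-! Announcing `ψ` and then `⋀ K_i χ_i` amounts to announcing `ψ ∧ [ψ](⋀ K_i χ_i)` once, and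
given `ψ` the reduction axiom for knowledge turns `[ψ]K_i χ_i` into `K_i [ψ]χ_i`, which is
equivalent to `K_i t([ψ]χ_i)` because `t` preserves truth. Announcing equivalent formulas
produces isomorphic submodels, so the two announcements agree. -/

namespace Model

variable {A : Type}

structure Iso (M N : Model A) where
  toEquiv : M.W ≃ N.W
  map_R : ∀ a v u, M.R a v u ↔ N.R a (toEquiv v) (toEquiv u)
  map_V : ∀ n v, M.V n v ↔ N.V n (toEquiv v)

def Iso.refl (M : Model A) : M.Iso M where
  toEquiv := Equiv.refl M.W
  map_R _ _ _ := Iff.rfl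
  map_V _ _ := Iff.rfl

def Iso.restrict {M N : Model A} (e : M.Iso N) {S : Set M.W} {T : Set N.W}
    (h : ∀ v, v ∈ S ↔ e.toEquiv v ∈ T) : (M.restrict S).Iso (N.restrict T) where
  toEquiv := e.toEquiv.subtypeEquiv h
  map_R a v u := e.map_R a v.1 u.1
  map_V n v := e.map_V n v.1

def restrictRestrictIso (M : Model A) (S : Set M.W) (T : Set (M.restrict S).W) {U : Set M.W}
    (h : ∀ v, v ∈ U ↔ ∃ hv : v ∈ S, (⟨v, hv⟩ : (M.restrict S).W) ∈ T) :
    ((M.restrict S).restrict T).Iso (M.restrict U) where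
  toEquiv := (Equiv.subtypeSubtypeEquivSubtypeExists S T).trans
    (Equiv.subtypeEquivRight fun v => (h v).symm)
  map_R _ _ _ := Iff.rfl
  map_V _ _ := Iff.rfl

theorem Iso.sat_iff (φ : Form A) {M N : Model A} (e : M.Iso N) (w : M.W) :
    Sat M w φ ↔ Sat N (e.toEquiv w) φ := by
  induction φ generalizing M N with
  | atom n => exact e.map_V n w
  | bot => rfl
  | neg φ ih => exact not_congr (ih e w)
  | and φ ψ ihφ ihψ => exact and_congr (ihφ e w) (ihψ e w)
  | know a φ ih =>
    exact e.toEquiv.forall_congr fun v => imp_congr (e.map_R a w v) (ih e v)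
  | ann α β ihα ihβ =>
    let eα := e.restrict (S := {v | Sat M v α}) (T := {v | Sat N v α}) (ihα e)
    exact ⟨fun H hw => (ihβ eα ⟨w, (ihα e w).2 hw⟩).1 (H _),
      fun H hw => (ihβ eα ⟨w, hw⟩).2 (H _)⟩

end Model

section Semantics

variable {A : Type} (M : Model A) (w : M.W)

theorem sat_imp (φ ψ : Form A) : Sat M w (φ.imp ψ) ↔ (Sat M w φ → Sat M w ψ) := by
  simp only [Form.imp, Sat]
  tauto

theorem sat_ann_congr {φ φ' : Form A} (h : ∀ v, Sat M v φ ↔ Sat M v φ') (ψ : Form A) :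
    Sat M w (.ann φ ψ) ↔ Sat M w (.ann φ' ψ) := by
  let e := (Model.Iso.refl M).restrict (S := {v | Sat M v φ}) (T := {v | Sat M v φ'}) h
  exact ⟨fun H hw => (e.sat_iff ψ ⟨w, (h w).2 hw⟩).1 (H _),
    fun H hw => (e.sat_iff ψ ⟨w, hw⟩).2 (H _)⟩

theorem sat_ann_atom (φ : Form A) (n : ℕ) :
    Sat M w (.ann φ (.atom n)) ↔ (Sat M w φ → M.V n w) :=
  Iff.rfl

theorem sat_ann_bot (φ : Form A) : Sat M w (.ann φ .bot) ↔ ¬ Sat M w φ :=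
  Iff.rfl

theorem sat_ann_neg (φ ψ : Form A) :
    Sat M w (.ann φ (.neg ψ)) ↔ (Sat M w φ → ¬ Sat M w (.ann φ ψ)) := by
  simp only [Sat]
  exact ⟨fun H hw Hψ => H hw (Hψ hw), fun H hw Hψ => H hw fun _ => Hψ⟩

theorem sat_ann_and (φ ψ χ : Form A) :
    Sat M w (.ann φ (.and ψ χ)) ↔ Sat M w (.ann φ ψ) ∧ Sat M w (.ann φ χ) := by
  simp only [Sat]
  exact forall_and

theorem sat_ann_know (φ : Form A) (a : A) (ψ : Form A) :
    Sat M w (.ann φ (.know a ψ)) ↔ (Sat M w φ → Sat M w (.know a (.ann φ ψ))) := by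
  simp only [Sat]
  exact ⟨fun H hw v hv hv' => H hw ⟨v, hv'⟩ hv, fun H hw v hv => H hw v.1 hv v.2⟩

theorem sat_ann_ann (φ ψ χ : Form A) :
    Sat M w (.ann (.and φ (.ann φ ψ)) χ) ↔ Sat M w (.ann φ (.ann ψ χ)) := by
  let e := M.restrictRestrictIso {v | Sat M v φ} {v | Sat _ v ψ}
    (U := {v | Sat M v (.and φ (.ann φ ψ))}) fun v =>
      ⟨fun hv => ⟨hv.1, hv.2 hv.1⟩, fun ⟨hφ, hψ⟩ => ⟨hφ, fun _ => hψ⟩⟩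
  exact ⟨fun H hφ hψ => (e.sat_iff χ ⟨⟨w, hφ⟩, hψ⟩).2 (H _),
    fun H hw => (e.sat_iff χ _).1 (H hw.1 (hw.2 hw.1))⟩

theorem sat_trAnn {φ tφ : Form A} (h : ∀ v, Sat M v tφ ↔ Sat M v φ) (ψ : Form A) :
    Sat M w (trAnn φ tφ ψ) ↔ Sat M w (.ann φ ψ) := by
  induction ψ generalizing φ tφ w with
  | atom n => rw [trAnn, sat_imp, h, sat_ann_atom]; rfl
  | bot => rw [trAnn, sat_imp, h, sat_ann_bot]; rfl
  | neg ψ ih => rw [trAnn, sat_imp, h, sat_ann_neg, Sat, ih w h]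
  | and ψ χ ihψ ihχ => rw [trAnn, sat_ann_and, Sat, ihψ w h, ihχ w h]
  | know a ψ ih =>
    rw [trAnn, sat_imp, h, sat_ann_know]
    exact imp_congr_right fun _ => forall₂_congr fun v _ => ih v h
  | ann ψ χ ihψ ihχ =>
    have h' : ∀ v, Sat M v (.and tφ (trAnn φ tφ ψ)) ↔ Sat M v (.and φ (.ann φ ψ)) :=
      fun v => and_congr (h v) (ihψ v h)
    rw [trAnn, ihχ w h', sat_ann_ann]

theorem sat_tr (φ : Form A) : Sat M w (tr φ) ↔ Sat M w φ := by
  induction φ generalizing w with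
  | atom n => rfl
  | bot => rfl
  | neg φ ih => exact not_congr (ih w)
  | and φ ψ ihφ ihψ => exact and_congr (ihφ w) (ihψ w)
  | know a φ ih => exact forall_congr' fun v => imp_congr_right fun _ => ih v
  | ann φ ψ ihφ _ => exact sat_trAnn M w ihφ ψ

theorem sat_gConj (G : Finset A) (f : A → Form A) :
    Sat M w (gConj G f) ↔ ∀ a ∈ G, Sat M w (.know a (f a)) := by
  suffices ∀ l : List A, Sat M w (l.foldr (fun a r => (Form.know a (f a)).and r) .top) ↔
      ∀ a ∈ l, Sat M w (.know a (f a)) by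
    simpa only [gConj, Finset.mem_toList] using this G.toList
  intro l
  induction l with
  | nil => simp [Sat, Form.top]
  | cons a l ih => rw [List.foldr_cons, Sat, ih, List.forall_mem_cons]

theorem sat_ann_gConj (φ : Form A) (G : Finset A) (f : A → Form A) :
    Sat M w (.ann φ (gConj G f)) ↔
      (Sat M w φ → ∀ a ∈ G, Sat M w (.know a (.ann φ (f a)))) := by
  refine forall_congr' fun hw => ?_
  refine (sat_gConj _ _ G f).trans ?_
  exact forall₂_congr fun a _ =>
    ⟨fun H v hv hv' => H ⟨v, hv'⟩ hv, fun H v hv => H v.1 hv v.2⟩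

end Semantics

theorem lemma_one_general {A : Type} (G : Finset A) (ψ : Form A)
    (χ : A → Form A) (φ : Form A)
    (M : Model A) (w : M.W) :
    Sat M w (Form.ann (ψ.and (gConj G (fun i => tr (Form.ann ψ (χ i))))) φ) ↔
      Sat M w (Form.ann ψ (Form.ann (gConj G χ) φ)) := by
  have hpre : ∀ v, Sat M v (ψ.and (gConj G fun i => tr (.ann ψ (χ i)))) ↔
      Sat M v (ψ.and (.ann ψ (gConj G χ))) := by
    intro v
    rw [Sat, Sat, sat_ann_gConj, sat_gConj]
    simp only [Sat, sat_tr]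
    tauto
  rw [sat_ann_congr M w hpre, sat_ann_ann]

/-- Lemma 1: [ψ ∧ ⋀_{i∈G} K_i t([ψ]χ_i)] φ ↔ [ψ][⋀_{i∈G} K_i χ_i] φ is valid,
for epistemic ψ and χ_i. -/
theorem lemma_one {A : Type} (G : Finset A) (ψ : Form A) (hψ : ψ.IsEL)
    (χ : A → Form A) (hχ : ∀ a, (χ a).IsEL) (φ : Form A)
    (M : Model A) (hM : M.IsEpistemic) (w : M.W) :
    Sat M w (Form.ann (ψ.and (gConj G (fun i => tr (Form.ann ψ (χ i))))) φ) ↔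
      Sat M w (Form.ann ψ (Form.ann (gConj G χ) φ)) :=
  lemma_one_general G ψ χ φ M w
end

section
/- The CAL analogue of the coalition logic maximality axiom (C3), ¬⟨[∅]⟩¬φ → ⟨[A]⟩φ, where A is the grand coalition, is valid. -/
/-- (M,w) ⊨ ⟨[G]⟩ P : coalition G has an announcement such that, simultaneously with
any announcement of the complement, P holds in the updated model. -/
def CoalWin {A : Type} [Fintype A] [DecidableEq A] (G : Finset A)
    (P : (M : Model A) → M.W → Prop) (M : Model A) (w : M.W) : Prop :=
  ∃ f : A → Form A, (∀ a, (f a).IsEL) ∧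
    ∀ g : A → Form A, (∀ a, (g a).IsEL) →
      Sat M w (gConj G f) ∧
      ∀ h : Sat M w ((gConj G f).and (gConj Gᶜ g)),
        P (M.restrict {v | Sat M v ((gConj G f).and (gConj Gᶜ g))}) ⟨w, h⟩

lemma gConj_empty {A : Type} (f : A → Form A) : gConj (∅ : Finset A) f = Form.top := by
  simp [gConj]

lemma sat_restrict_congr {A : Type} {M : Model A} {S S' : Set M.W} (hS : S = S')
    {w : M.W} (h : w ∈ S) (h' : w ∈ S') {φ : Form A}
    (hsat : Sat (M.restrict S) ⟨w, h⟩ φ) : Sat (M.restrict S') ⟨w, h'⟩ φ := by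
  subst hS; exact hsat

/-- CAL analogue of the coalition-logic maximality axiom C3: ¬⟨[∅]⟩¬φ → ⟨[A]⟩φ is valid. -/
theorem coal_maximality {A : Type} [Fintype A] [DecidableEq A] (φ : Form A)
    (M : Model A) (hM : M.IsEpistemic) (w : M.W)
    (h : ¬ CoalWin (∅ : Finset A) (fun N v => Sat N v (Form.neg φ)) M w) :
    CoalWin (Finset.univ : Finset A) (fun N v => Sat N v φ) M w := by
  classical
  have htopEL : ∀ a : A, (Form.top : Form A).IsEL := fun _ => by
    simp [Form.top, Form.IsEL]
  have h1 : ¬ ∀ g : A → Form A, (∀ a, (g a).IsEL) →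
      Sat M w (gConj (∅ : Finset A) (fun _ => Form.top)) ∧
      ∀ hh : Sat M w ((gConj (∅ : Finset A) (fun _ => Form.top)).and (gConj (∅ : Finset A)ᶜ g)),
        Sat (M.restrict {v | Sat M v ((gConj (∅ : Finset A) (fun _ => Form.top)).and (gConj (∅ : Finset A)ᶜ g))}) ⟨w, hh⟩ (Form.neg φ) :=
    fun hc => h ⟨_, htopEL, hc⟩
  push_neg at h1
  obtain ⟨g, hgEL, hg⟩ := h1
  have hsattop : Sat M w (gConj (∅ : Finset A) (fun _ => Form.top)) := by
    rw [gConj_empty]; exact fun hf => hf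
  obtain ⟨hh, hphi⟩ := hg hsattop
  have hphi' : Sat (M.restrict {v | Sat M v ((gConj (∅ : Finset A) (fun _ => Form.top)).and (gConj (∅ : Finset A)ᶜ g))}) ⟨w, hh⟩ φ :=
    not_not.mp hphi
  refine ⟨g, hgEL, fun g' hg'EL => ?_⟩
  have hcompl : (∅ : Finset A)ᶜ = (Finset.univ : Finset A) := by simp
  have hsatg : Sat M w (gConj (Finset.univ : Finset A) g) := by
    have := hh.2
    rwa [hcompl] at this
  refine ⟨hsatg, fun hh' => ?_⟩
  have hset : {v | Sat M v ((gConj (∅ : Finset A) (fun _ => Form.top)).and (gConj (∅ : Finset A)ᶜ g))}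
      = {v | Sat M v ((gConj (Finset.univ : Finset A) g).and (gConj (Finset.univ : Finset A)ᶜ g'))} := by
    ext v
    simp only [Set.mem_setOf_eq, hcompl, Finset.compl_univ, gConj_empty]
    show (¬ False ∧ _) ↔ (_ ∧ ¬ False)
    tauto
  exact sat_restrict_congr hset hh hh' hphi'
end
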